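/- arXiv:1011.4502 — 4 statements merged into one kernel-verified Lean document; each statement's English description precedes it below -/
import Mathlib

section
/- Let H(x,t) = A(|x| + ωt − B)_+ with constants A > 0, ω > 0, and R/2 < B < R. If ω/A > 1 + 2(m−1)(n−1)(R−B)/R, then on the positivity set {|x| + ωt > B} intersected with {|x| ≤ R, ω^{−1}(B−R) ≤ t ≤ 0}, the function H satisfies H_t ≥ (m−1)·H·ΔH + |∇H|² pointwise; moreover on the free boundary {|x| + ωt = B} the outward normal velocity ω satisfies ω ≥ |∇H| = A. -/
open scoped RealInnerProductSpace
open Metric Set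

noncomputable def lap {n : ℕ} (f : EuclideanSpace ℝ (Fin n) → ℝ) (x : EuclideanSpace ℝ (Fin n)) : ℝ :=
  ∑ i : Fin n, iteratedFDeriv ℝ 2 f x ![EuclideanSpace.single i 1, EuclideanSpace.single i 1]

section Aux

variable {E : Type*} [NormedAddCommGroup E] [InnerProductSpace ℝ E]

/-- the real-bilinear inner product as a continuous linear map in the first variable. -/
noncomputable def Jmap (E : Type*) [NormedAddCommGroup E] [InnerProductSpace ℝ E] :
    E →L[ℝ] E →L[ℝ] ℝ :=
  LinearMap.mkContinuous
    { toFun := fun y => innerSL ℝ y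
      map_add' := by intro y z; ext u; simp [inner_add_left]
      map_smul' := by intro c y; ext u; simp [real_inner_smul_left] }
    1 (fun y => by simp [innerSL_apply_norm])

@[simp] lemma Jmap_apply (y u : E) : Jmap E y u = ⟪y, u⟫ := rfl

theorem myHasFDerivAt_norm (x : E) (hx : x ≠ 0) :
    HasFDerivAt (fun y : E => ‖y‖) (‖x‖⁻¹ • innerSL ℝ x) x := by
  have h1 := (hasStrictFDerivAt_norm_sq x).hasFDerivAt
  have hr : (0:ℝ) < ‖x‖ := norm_pos_iff.2 hx
  have h2 : HasDerivAt Real.sqrt (1 / (2 * Real.sqrt (‖x‖^2))) (‖x‖^2) :=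
    Real.hasDerivAt_sqrt (by positivity)
  have h3 := h2.comp_hasFDerivAt x h1
  rw [show Real.sqrt ∘ (fun y : E => ‖y‖^2) = fun y : E => ‖y‖ from
    funext fun y => Real.sqrt_sq (norm_nonneg y)] at h3
  refine h3.congr_fderiv ?_
  rw [Real.sqrt_sq (norm_nonneg x)]
  ext y
  simp [two_smul]
  field_simp
  ring

theorem myPhiDeriv (A : ℝ) (x : E) (hx : x ≠ 0) :
    HasFDerivAt (fun y : E => (A * ‖y‖⁻¹) • innerSL ℝ y)
      ((A * ‖x‖⁻¹) • Jmap E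
        + ((A * -(‖x‖^2)⁻¹) • (‖x‖⁻¹ • innerSL ℝ x)).smulRight (innerSL ℝ x)) x := by
  have hr : (0:ℝ) < ‖x‖ := norm_pos_iff.2 hx
  have hd : HasDerivAt (fun r : ℝ => A * r⁻¹) (A * -(‖x‖^2)⁻¹) ‖x‖ :=
    (hasDerivAt_inv hr.ne').const_mul A
  have hc := hd.comp_hasFDerivAt x (myHasFDerivAt_norm x hx)
  have hf : HasFDerivAt (fun y : E => innerSL ℝ y) (Jmap E) x := (Jmap E).hasFDerivAt
  exact hc.smul hf

end Aux


private lemma arith_aux (m A ω B R r s : ℝ) (hm : 1 < m) (hA : 0 < A)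
    (hR : 0 < R) (hB₂ : B < R) {ν : ℝ} (hn2 : 2 ≤ ν)
    (hspeed : ω / A > 1 + 2 * (m - 1) * (ν - 1) * (R - B) / R)
    (hr : R / 2 < r) (hs0 : 0 ≤ s) (hs1 : s ≤ R - B) :
    A * ω ≥ (m - 1) * (A * s) * (A * (ν - 1) / r) + A ^ 2 := by
  have hrpos : 0 < r := by linarith
  have hrinv : r⁻¹ ≤ 2 / R := by
    have h1 : (R/2)⁻¹ = 2 / R := by rw [inv_div]
    have h2 : r⁻¹ ≤ (R/2)⁻¹ := inv_anti₀ (by linarith) (by linarith)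
    linarith
  have hmn : (0:ℝ) ≤ (m - 1) * (ν - 1) := by nlinarith
  have h1 : s * r⁻¹ ≤ (R - B) * (2 / R) :=
    mul_le_mul hs1 hrinv (by positivity) (by linarith)
  have hbound : (m - 1) * (A * s) * (A * (ν - 1) / r)
      ≤ ((m - 1) * (ν - 1)) * ((R - B) * (2 / R)) * A ^ 2 := by
    have heq : (m - 1) * (A * s) * (A * (ν - 1) / r)
        = ((m - 1) * (ν - 1)) * (s * r⁻¹) * A ^ 2 := by
      field_simp
    rw [heq]
    exact mul_le_mul_of_nonneg_right (mul_le_mul_of_nonneg_left h1 hmn) (sq_nonneg A)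
  have hsp : (1 + 2 * (m - 1) * (ν - 1) * (R - B) / R) * A < ω :=
    (lt_div_iff₀ hA).1 hspeed
  have hsp2 := mul_lt_mul_of_pos_left hsp hA
  have hexp : A * ((1 + 2 * (m - 1) * (ν - 1) * (R - B) / R) * A)
      = A ^ 2 + ((m - 1) * (ν - 1)) * ((R - B) * (2 / R)) * A ^ 2 := by
    field_simp
  rw [hexp] at hsp2
  linarith

/-- the spherical traveling wave `H(x,t) = A(|x| + ωt - B)_+` with
`R/2 < B < R` and `ω/A > 1 + 2(m-1)(n-1)(R-B)/R` is a classical free boundary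
supersolution of the PME in `{|x| ≤ R} × [ω⁻¹(B-R), 0]`: on the positivity set
`H_t ≥ (m-1) H ΔH + |∇H|²`, and on the free boundary the normal velocity `ω`
satisfies `ω ≥ |∇H| = A`. -/
theorem traveling_wave_supersolution {n : ℕ} (hn : 2 ≤ n) (m A ω B R : ℝ)
    (hm : 1 < m) (hA : 0 < A) (hω : 0 < ω)
    (hB₁ : R / 2 < B) (hB₂ : B < R)
    (hspeed : ω / A > 1 + 2 * (m - 1) * (n - 1) * (R - B) / R)
    (H : EuclideanSpace ℝ (Fin n) → ℝ → ℝ)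
    (hH : ∀ x t, H x t = A * max (‖x‖ + ω * t - B) 0) :
    (∀ (x : EuclideanSpace ℝ (Fin n)) (t : ℝ),
      ‖x‖ ≤ R → ω⁻¹ * (B - R) ≤ t → t ≤ 0 → ‖x‖ + ω * t > B →
      deriv (H x) t ≥
        (m - 1) * H x t * lap (fun y => H y t) x + ‖gradient (fun y => H y t) x‖ ^ 2) ∧
    (∀ (x : EuclideanSpace ℝ (Fin n)) (t : ℝ),
      ‖x‖ ≤ R → ω⁻¹ * (B - R) ≤ t → t ≤ 0 → ‖x‖ + ω * t = B → ω ≥ A) := by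
  have hn2 : (2:ℝ) ≤ (n:ℝ) := by exact_mod_cast hn
  have hR : 0 < R := by linarith
  have hB : 0 < B := by linarith
  constructor
  · intro x t hxR ht1 ht2 hpos
    have hwt : ω * t ≤ 0 := mul_nonpos_of_nonneg_of_nonpos hω.le ht2
    have hxB : B < ‖x‖ := by linarith
    have hr : (0:ℝ) < ‖x‖ := by linarith
    have hx0 : x ≠ 0 := by
      intro h; rw [h, norm_zero] at hr; exact lt_irrefl 0 hr
    -- the positivity set
    set U : Set (EuclideanSpace ℝ (Fin n)) := {y : EuclideanSpace ℝ (Fin n) | B < ‖y‖ + ω * t} with hU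
    have hUopen : IsOpen U :=
      isOpen_lt continuous_const ((continuous_norm (E := EuclideanSpace ℝ (Fin n))).add continuous_const)
    have hxU : x ∈ U := hpos
    set φ : EuclideanSpace ℝ (Fin n) → (EuclideanSpace ℝ (Fin n) →L[ℝ] ℝ) := fun y => (A * ‖y‖⁻¹) • innerSL ℝ y with hφ
    have hderiv : ∀ y ∈ U, HasFDerivAt (fun z => H z t) (φ y) y := by
      intro y hy
      have hyB : B < ‖y‖ + ω * t := hy
      have hy0 : y ≠ 0 := by
        intro h; rw [h, norm_zero] at hyB; linarith
      have hloc : (fun z => H z t) =ᶠ[nhds y] fun z => A * ‖z‖ + A * (ω * t - B) := by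
        filter_upwards [hUopen.mem_nhds hy] with z hz
        rw [hH, max_eq_left (by simp only [hU, Set.mem_setOf_eq] at hz; linarith)]
        ring
      have hg : HasFDerivAt (fun z : EuclideanSpace ℝ (Fin n) => A * ‖z‖ + A * (ω * t - B)) (φ y) y := by
        have := ((myHasFDerivAt_norm y hy0).const_mul A).add_const (A * (ω * t - B))
        rwa [smul_smul] at this
      exact hg.congr_of_eventuallyEq hloc
    have hfd : ∀ y ∈ U, fderiv ℝ (fun z => H z t) y = φ y := fun y hy => (hderiv y hy).fderiv
    have hev2 : fderiv ℝ (fun z => H z t) =ᶠ[nhds x] φ :=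
      Filter.eventuallyEq_of_mem (hUopen.mem_nhds hxU) hfd
    set D : EuclideanSpace ℝ (Fin n) →L[ℝ] EuclideanSpace ℝ (Fin n) →L[ℝ] ℝ :=
      (A * ‖x‖⁻¹) • Jmap (EuclideanSpace ℝ (Fin n))
        + ((A * -(‖x‖^2)⁻¹) • (‖x‖⁻¹ • innerSL ℝ x)).smulRight (innerSL ℝ x) with hD
    have h2nd : fderiv ℝ (fderiv ℝ (fun z => H z t)) x = D := by
      rw [hev2.fderiv_eq]
      exact (myPhiDeriv A x hx0).fderiv
    -- Laplacian computation
    have hsum : ∑ i : Fin n, (x i)^2 = ‖x‖^2 := by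
      rw [EuclideanSpace.norm_eq, Real.sq_sqrt (by positivity)]
      simp [sq_abs]
    have hlap : lap (fun z => H z t) x = A * ((n:ℝ) - 1) / ‖x‖ := by
      unfold lap
      have hterm : ∀ i : Fin n,
          iteratedFDeriv ℝ 2 (fun z => H z t) x
            ![EuclideanSpace.single i 1, EuclideanSpace.single i 1]
          = A * ‖x‖⁻¹ - A * (‖x‖^2)⁻¹ * ‖x‖⁻¹ * (x i)^2 := by
        intro i
        rw [iteratedFDeriv_two_apply, h2nd]
        simp [hD, EuclideanSpace.inner_single_left, EuclideanSpace.inner_single_right,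
          real_inner_comm]
        ring
      rw [Finset.sum_congr rfl fun i _ => hterm i, Finset.sum_sub_distrib,
        Finset.sum_const, ← Finset.mul_sum, hsum]
      simp only [Finset.card_univ, Fintype.card_fin, nsmul_eq_mul]
      field_simp
    -- gradient computation
    have hgrad : ‖gradient (fun z => H z t) x‖ = A := by
      have h1 : gradient (fun z => H z t) x = (InnerProductSpace.toDual ℝ (EuclideanSpace ℝ (Fin n))).symm (φ x) := by
        unfold gradient
        rw [hfd x hxU]
      rw [h1, LinearIsometryEquiv.norm_map, hφ, norm_smul, innerSL_apply_norm]
      rw [Real.norm_eq_abs, abs_of_pos (by positivity)]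
      field_simp
    -- time derivative
    have hdt : deriv (H x) t = A * ω := by
      have hcont : ContinuousAt (fun s : ℝ => ‖x‖ + ω * s) t := by fun_prop
      have hloc : H x =ᶠ[nhds t] fun s => A * (‖x‖ + ω * s - B) := by
        filter_upwards [hcont.eventually (eventually_gt_nhds hpos)] with s hs
        rw [hH, max_eq_left (by linarith)]
      rw [hloc.deriv_eq]
      have hder : HasDerivAt (fun s : ℝ => A * (‖x‖ + ω * s - B)) (A * ω) t := by
        have h := ((((hasDerivAt_id t).const_mul ω).const_add ‖x‖).sub_const B).const_mul A
        simpa using h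
      exact hder.deriv
    have hval : H x t = A * (‖x‖ + ω * t - B) := by
      rw [hH, max_eq_left (by linarith)]
    rw [hdt, hlap, hgrad, hval]
    clear h2nd hev2 hfd hderiv hxU hUopen hsum
    clear_value D φ U
    clear hD hφ hU D φ U
    exact arith_aux m A ω B R ‖x‖ (‖x‖ + ω * t - B) hm hA hR hB₂ hn2 hspeed
      (by linarith) (by linarith) (by linarith)
  · intro x t _ _ _ _
    have hkey : 0 ≤ 2 * (m - 1) * ((n:ℝ) - 1) * (R - B) / R := by
      apply div_nonneg _ hR.le
      have h1 : (0:ℝ) ≤ (n:ℝ) - 1 := by linarith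
      have := mul_nonneg (mul_nonneg (by linarith : (0:ℝ) ≤ 2 * (m - 1)) h1)
        (by linarith : (0:ℝ) ≤ R - B)
      linarith
    have : (1:ℝ) < ω / A := by linarith
    have := (one_lt_div hA).1 this
    linarith
end

section
/- Every classical free boundary subsolution w of the PME with drift is a viscosity subsolution: if φ ∈ C^{2,1} touches w from above at a point (x₀,t₀), then φ_t ≤ (m−1)φΔφ + |∇φ|² + ∇φ·∇Φ + (m−1)φΔΦ at (x₀,t₀). In particular, if the touching point lies on the free boundary ∂{w>0} then necessarily φ(x₀,t₀) = 0, ∇φ(x₀,t₀) = 0, and φ_t(x₀,t₀) ≤ 0. -/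
open scoped RealInnerProductSpace
open Metric Set
open Filter Topology

/-- One-sided derivative sign: if `f t₀ = 0` and `f ≥ 0` on a left neighborhood,
then `deriv f t₀ ≤ 0`. -/
lemma deriv_nonpos_of_left_nonneg {f : ℝ → ℝ} {t₀ : ℝ}
    (hf : DifferentiableAt ℝ f t₀) (h0 : f t₀ = 0) {ε : ℝ} (hε : 0 < ε)
    (hge : ∀ t, t₀ - ε ≤ t → t ≤ t₀ → 0 ≤ f t) : deriv f t₀ ≤ 0 := by
  have hd := hf.hasDerivAt
  rw [hasDerivAt_iff_tendsto_slope] at hd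
  have hd' : Tendsto (slope f t₀) (𝓝[<] t₀) (𝓝 (deriv f t₀)) :=
    hd.mono_left (nhdsWithin_mono _ (fun t ht => ne_of_lt ht))
  refine le_of_tendsto hd' ?_
  filter_upwards [Ioo_mem_nhdsLT_of_mem (by constructor <;> linarith : t₀ ∈ Ioc (t₀ - ε) t₀)]
    with t ht
  rw [slope_def_field]
  have h1 : 0 ≤ f t := hge t ht.1.le ht.2.le
  have h2 : t - t₀ < 0 := by linarith [ht.2]
  rw [h0, sub_zero]
  exact div_nonpos_of_nonneg_of_nonpos h1 h2.le

/-- 1-D second derivative test: at a local minimum of a `C²` function the second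
derivative is nonnegative. -/
lemma second_deriv_nonneg_of_isLocalMin {f : ℝ → ℝ} (hf : ContDiff ℝ 2 f)
    (h : IsLocalMin f 0) : 0 ≤ deriv (deriv f) 0 := by
  by_contra hneg
  push_neg at hneg
  have hdiff : Differentiable ℝ f := hf.differentiable (by norm_num)
  have hf' : ContDiff ℝ 1 (deriv f) := by
    have h2 : ContDiff ℝ ((1 : ℕ) + 1) f := by exact_mod_cast hf
    exact (contDiff_succ_iff_deriv.1 h2).2.2
  have hd0 : deriv f 0 = 0 := h.deriv_eq_zero
  have hd : HasDerivAt (deriv f) (deriv (deriv f) 0) 0 :=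
    ((hf'.differentiable (by norm_num)) 0).hasDerivAt
  rw [hasDerivAt_iff_tendsto_slope] at hd
  have hev : ∀ᶠ t in 𝓝[≠] (0:ℝ), slope (deriv f) 0 t < 0 :=
    hd (Iio_mem_nhds hneg)
  rw [eventually_nhdsWithin_iff] at hev
  have hmin : ∀ᶠ t in 𝓝 (0:ℝ), f 0 ≤ f t := h
  obtain ⟨δ, hδpos, hδ⟩ := Metric.eventually_nhds_iff.1 (hev.and hmin)
  -- on (0, δ), deriv f < 0
  have hderivneg : ∀ t, 0 < t → t < δ → deriv f t < 0 := by
    intro t ht0 htδ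
    have hdist : dist t 0 < δ := by
      rw [Real.dist_eq, sub_zero, abs_of_pos ht0]; exact htδ
    have hs := (hδ hdist).1 (by simpa using ne_of_gt ht0)
    rw [slope_def_field, hd0, sub_zero, sub_zero] at hs
    by_contra hge
    push_neg at hge
    exact absurd hs (not_lt.2 (div_nonneg hge ht0.le))
  -- MVT on [0, δ/2]
  have hb : (0:ℝ) < δ / 2 := by linarith
  obtain ⟨c, hc, hceq⟩ := exists_deriv_eq_slope f hb
    (hdiff.continuous.continuousOn) (hdiff.differentiableOn)
  have hfb : f 0 ≤ f (δ / 2) := by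
    have : dist (δ/2) (0:ℝ) < δ := by
      rw [Real.dist_eq, sub_zero, abs_of_pos hb]; linarith
    exact (hδ this).2
  have hcneg : deriv f c < 0 := hderivneg c hc.1 (by linarith [hc.2])
  rw [hceq] at hcneg
  have : 0 ≤ (f (δ/2) - f 0) / (δ/2 - 0) := by
    apply div_nonneg (by linarith) (by linarith)
  linarith

/-- Directional second-derivative test for `C²` functions on a normed space. -/
lemma iteratedFDeriv_two_nonneg_of_isLocalMin {E : Type*} [NormedAddCommGroup E]
    [NormedSpace ℝ E] {F : E → ℝ} (hF : ContDiff ℝ 2 F) {x₀ : E}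
    (h : IsLocalMin F x₀) (v : E) : 0 ≤ iteratedFDeriv ℝ 2 F x₀ ![v, v] := by
  set L : ℝ → E := fun s => x₀ + s • v with hL
  have hLc : ContDiff ℝ 2 L := contDiff_const.add (contDiff_id.smul contDiff_const)
  set g : ℝ → ℝ := fun s => F (x₀ + s • v) with hg
  have hgC : ContDiff ℝ 2 g := hF.comp hLc
  have hL0 : L 0 = x₀ := by simp [hL]
  have hgmin : IsLocalMin g 0 := by
    have hcont : ContinuousAt L 0 := hLc.continuous.continuousAt
    have := hcont.tendsto
    rw [hL0] at this
    have hev := this.eventually (h : ∀ᶠ y in 𝓝 x₀, F x₀ ≤ F y)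
    refine hev.mono fun s hs => ?_
    simpa [hg, hL0] using hs
  have hLd : ∀ s : ℝ, HasDerivAt L v s := by
    intro s
    simpa [hL] using ((hasDerivAt_id s).smul_const v).const_add x₀
  have hgd : ∀ s : ℝ, HasDerivAt g (fderiv ℝ F (L s) v) s := by
    intro s
    exact ((hF.differentiable (by norm_num) (L s)).hasFDerivAt).comp_hasDerivAt s (hLd s)
  have hderivg : deriv g = fun s => fderiv ℝ F (L s) v := funext fun s => (hgd s).deriv
  have hF' : ContDiff ℝ 1 (fderiv ℝ F) := hF.fderiv_right (by norm_num)
  have hc : HasDerivAt (fun s => fderiv ℝ F (L s)) (fderiv ℝ (fderiv ℝ F) x₀ v) 0 := by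
    have h1 : HasFDerivAt (fderiv ℝ F) (fderiv ℝ (fderiv ℝ F) (L 0)) (L 0) :=
      ((hF'.differentiable (by norm_num)) (L 0)).hasFDerivAt
    have := h1.comp_hasDerivAt 0 (hLd 0)
    rwa [hL0] at this
  have hc2 : HasDerivAt (fun s => fderiv ℝ F (L s) v) (fderiv ℝ (fderiv ℝ F) x₀ v v) 0 := by
    have := hc.clm_apply (hasDerivAt_const 0 v)
    simpa using this
  have hkey : deriv (deriv g) 0 = fderiv ℝ (fderiv ℝ F) x₀ v v := by
    rw [hderivg]; exact hc2.deriv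
  have := second_deriv_nonneg_of_isLocalMin hgC hgmin
  rw [hkey] at this
  rw [iteratedFDeriv_two_apply]
  simpa using this

def TouchesAbove {n : ℕ} (φ u : EuclideanSpace ℝ (Fin n) → ℝ → ℝ)
    (x₀ : EuclideanSpace ℝ (Fin n)) (t₀ : ℝ) : Prop :=
  φ x₀ t₀ = u x₀ t₀ ∧
    ∃ ε > 0, ∀ x t, ‖x - x₀‖ ≤ ε → |t - t₀| ≤ ε → t ≤ t₀ → u x t ≤ φ x t

/-- every classical free boundary subsolution `w` of the PME with drift is a
viscosity subsolution; moreover at a touching point on the free boundary the test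
function satisfies `φ = 0`, `∇φ = 0` and `φ_t ≤ 0`.  The requirement that
`w ∈ C^{2,1}(closure{w>0})` is encoded via a smooth extension `W` of `w` to space-time. -/
theorem classical_subsolution_is_viscosity {n : ℕ} (m : ℝ) (hm : 1 < m)
    (Φ : EuclideanSpace ℝ (Fin n) → ℝ) (hΦ : ContDiff ℝ 2 Φ)
    (w W : EuclideanSpace ℝ (Fin n) → ℝ → ℝ)
    (hw_nonneg : ∀ x t, 0 ≤ w x t)
    (hw_cont : Continuous (fun p : EuclideanSpace ℝ (Fin n) × ℝ => w p.1 p.2))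
    (hW_smooth : ContDiff ℝ 2 (fun p : EuclideanSpace ℝ (Fin n) × ℝ => W p.1 p.2))
    (hWw : ∀ p ∈ closure {p : EuclideanSpace ℝ (Fin n) × ℝ | 0 < w p.1 p.2},
      W p.1 p.2 = w p.1 p.2)
    -- differential inequality in the positivity set
    (hPDE : ∀ p : EuclideanSpace ℝ (Fin n) × ℝ, 0 < w p.1 p.2 →
      deriv (W p.1) p.2 ≤
        (m - 1) * W p.1 p.2 * lap (fun y => W y p.2) p.1
          + ‖gradient (fun y => W y p.2) p.1‖ ^ 2
          + ⟪gradient (fun y => W y p.2) p.1, gradient Φ p.1⟫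
          + (m - 1) * W p.1 p.2 * lap Φ p.1)
    -- nondegeneracy and free boundary velocity condition
    (hFB : ∀ p ∈ frontier {p : EuclideanSpace ℝ (Fin n) × ℝ | 0 < w p.1 p.2},
      ‖gradient (fun y => W y p.2) p.1‖ > 0 ∧
      deriv (W p.1) p.2 ≤
        ‖gradient (fun y => W y p.2) p.1‖ ^ 2
          + ⟪gradient Φ p.1, gradient (fun y => W y p.2) p.1⟫) :
    ∀ (φ : EuclideanSpace ℝ (Fin n) → ℝ → ℝ),
      ContDiff ℝ 2 (fun p : EuclideanSpace ℝ (Fin n) × ℝ => φ p.1 p.2) →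
      ∀ x₀ t₀, TouchesAbove φ w x₀ t₀ →
        (deriv (φ x₀) t₀ ≤
          (m - 1) * φ x₀ t₀ * lap (fun y => φ y t₀) x₀
            + ‖gradient (fun y => φ y t₀) x₀‖ ^ 2
            + ⟪gradient (fun y => φ y t₀) x₀, gradient Φ x₀⟫
            + (m - 1) * φ x₀ t₀ * lap Φ x₀) ∧
        ((x₀, t₀) ∈ frontier {p : EuclideanSpace ℝ (Fin n) × ℝ | 0 < w p.1 p.2} →
          φ x₀ t₀ = 0 ∧ gradient (fun y => φ y t₀) x₀ = 0 ∧ deriv (φ x₀) t₀ ≤ 0) := by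
  intro φ hφ x₀ t₀ hT
  obtain ⟨heq, ε, hε, htouch⟩ := hT
  have hφx : ContDiff ℝ 2 (fun y => φ y t₀) :=
    hφ.comp (contDiff_id.prodMk contDiff_const)
  have hφt : ContDiff ℝ 2 (φ x₀) :=
    hφ.comp (contDiff_const.prodMk contDiff_id)
  have hdiffφt : DifferentiableAt ℝ (φ x₀) t₀ :=
    (hφt.differentiable (by norm_num)).differentiableAt
  by_cases hpos : 0 < w x₀ t₀
  · -- the touching point is in the (open) positivity set
    have hS : IsOpen {p : EuclideanSpace ℝ (Fin n) × ℝ | 0 < w p.1 p.2} :=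
      isOpen_lt continuous_const hw_cont
    have hmem : ((x₀, t₀) : EuclideanSpace ℝ (Fin n) × ℝ) ∈
        {p : EuclideanSpace ℝ (Fin n) × ℝ | 0 < w p.1 p.2} := hpos
    obtain ⟨δ, hδpos, hδ⟩ := Metric.isOpen_iff.1 hS _ hmem
    have hWeq : ∀ (x) (t : ℝ), dist x x₀ < δ → dist t t₀ < δ → W x t = w x t ∧ 0 < w x t := by
      intro x t hx ht
      have hball : ((x, t) : EuclideanSpace ℝ (Fin n) × ℝ) ∈ ball ((x₀, t₀) :
          EuclideanSpace ℝ (Fin n) × ℝ) δ := by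
        rw [mem_ball, Prod.dist_eq]
        exact max_lt hx ht
      have hin := hδ hball
      exact ⟨hWw (x, t) (subset_closure hin), hin⟩
    set ε' := min ε (δ / 2) with hε'
    have hε'pos : 0 < ε' := lt_min hε (by linarith)
    have hWx : ContDiff ℝ 2 (fun y => W y t₀) :=
      hW_smooth.comp (contDiff_id.prodMk contDiff_const)
    have hWt : ContDiff ℝ 2 (W x₀) :=
      hW_smooth.comp (contDiff_const.prodMk contDiff_id)
    have hdiffWt : DifferentiableAt ℝ (W x₀) t₀ :=
      (hWt.differentiable (by norm_num)).differentiableAt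
    have hWval : W x₀ t₀ = φ x₀ t₀ :=
      ((hWeq x₀ t₀ (by simpa using hδpos) (by simpa using hδpos)).1).trans heq.symm
    have hWpos : 0 < W x₀ t₀ := by
      rw [(hWeq x₀ t₀ (by simpa using hδpos) (by simpa using hδpos)).1]; exact hpos
    -- spatial local minimum of φ - W at x₀ (time t₀ frozen)
    have hmin : IsLocalMin (fun y => φ y t₀ - W y t₀) x₀ := by
      have hev : ∀ᶠ y in 𝓝 x₀, φ x₀ t₀ - W x₀ t₀ ≤ φ y t₀ - W y t₀ := by
        filter_upwards [Metric.ball_mem_nhds x₀ hε'pos] with y hy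
        have hy1 : dist y x₀ < δ :=
          lt_of_lt_of_le hy (le_trans (min_le_right _ _) (by linarith))
        have hy2 : ‖y - x₀‖ ≤ ε := by
          rw [← dist_eq_norm]
          exact le_of_lt (lt_of_lt_of_le hy (min_le_left _ _))
        have hW' := (hWeq y t₀ hy1 (by simpa using hδpos)).1
        have hle := htouch y t₀ hy2 (by simp [hε.le]) le_rfl
        have h0 : φ x₀ t₀ - W x₀ t₀ = 0 := by rw [hWval]; ring
        rw [h0, hW']
        linarith
      exact hev
    have hdφ : DifferentiableAt ℝ (fun y => φ y t₀) x₀ :=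
      (hφx.differentiable (by norm_num)).differentiableAt
    have hdW : DifferentiableAt ℝ (fun y => W y t₀) x₀ :=
      (hWx.differentiable (by norm_num)).differentiableAt
    have hfd : fderiv ℝ (fun y => φ y t₀) x₀ = fderiv ℝ (fun y => W y t₀) x₀ := by
      have hfd0 : fderiv ℝ (fun y => φ y t₀ - W y t₀) x₀ = 0 := hmin.fderiv_eq_zero
      rw [fderiv_fun_sub hdφ hdW] at hfd0
      exact sub_eq_zero.1 hfd0
    have hgradeq : gradient (fun y => φ y t₀) x₀ = gradient (fun y => W y t₀) x₀ := by
      unfold gradient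
      rw [hfd]
    -- laplacian comparison
    have hsub_eq : ∀ v : EuclideanSpace ℝ (Fin n),
        iteratedFDeriv ℝ 2 (fun y => φ y t₀ - W y t₀) x₀ ![v, v]
          = iteratedFDeriv ℝ 2 (fun y => φ y t₀) x₀ ![v, v]
            - iteratedFDeriv ℝ 2 (fun y => W y t₀) x₀ ![v, v] := by
      intro v
      have h1 : (fun y => φ y t₀ - W y t₀)
          = (fun y => φ y t₀) + fun y => -W y t₀ := by
        funext y; simp [sub_eq_add_neg]
      rw [h1, iteratedFDeriv_add_apply hφx.contDiffAt hWx.neg.contDiffAt]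
      have h2 : (fun x => -W x t₀) = -(fun y => W y t₀) := rfl
      rw [ContinuousMultilinearMap.add_apply, h2, iteratedFDeriv_neg_apply]
      simp [sub_eq_add_neg]
    have hlap : lap (fun y => W y t₀) x₀ ≤ lap (fun y => φ y t₀) x₀ := by
      rw [← sub_nonneg]
      unfold lap
      rw [← Finset.sum_sub_distrib]
      apply Finset.sum_nonneg
      intro i _
      rw [← hsub_eq]
      exact iteratedFDeriv_two_nonneg_of_isLocalMin (hφx.sub hWx) hmin _
    -- time derivative comparison
    have htime : deriv (fun t => φ x₀ t - W x₀ t) t₀ ≤ 0 := by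
      apply deriv_nonpos_of_left_nonneg (hdiffφt.fun_sub hdiffWt)
        (by rw [hWval]; ring) hε'pos
      intro t h1 h2
      have habs : |t - t₀| ≤ ε' := by
        rw [abs_sub_comm, abs_of_nonneg (by linarith)]
        linarith
      have ht1 : |t - t₀| ≤ ε := le_trans habs (min_le_left _ _)
      have ht2 : dist t t₀ < δ := by
        rw [Real.dist_eq]
        exact lt_of_le_of_lt (le_trans habs (min_le_right _ _)) (by linarith)
      have hW' := (hWeq x₀ t (by simpa using hδpos) ht2).1
      have hle := htouch x₀ t (by simp [hε.le]) ht1 h2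
      rw [hW']
      linarith
    have hderivle : deriv (φ x₀) t₀ ≤ deriv (W x₀) t₀ := by
      rw [deriv_fun_sub hdiffφt hdiffWt] at htime
      linarith
    have hPDE' : deriv (W x₀) t₀ ≤
        (m - 1) * W x₀ t₀ * lap (fun y => W y t₀) x₀
          + ‖gradient (fun y => W y t₀) x₀‖ ^ 2
          + ⟪gradient (fun y => W y t₀) x₀, gradient Φ x₀⟫
          + (m - 1) * W x₀ t₀ * lap Φ x₀ := hPDE (x₀, t₀) hpos
    constructor
    · rw [hgradeq, ← hWval]
      have hmul : (m - 1) * W x₀ t₀ * lap (fun y => W y t₀) x₀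
          ≤ (m - 1) * W x₀ t₀ * lap (fun y => φ y t₀) x₀ :=
        mul_le_mul_of_nonneg_left hlap (mul_nonneg (by linarith) hWpos.le)
      linarith
    · intro hfr
      exfalso
      rw [hS.frontier_eq] at hfr
      exact hfr.2 hpos
  · -- the touching point is outside the positivity set: w x₀ t₀ = 0
    have hw0 : w x₀ t₀ = 0 := le_antisymm (not_lt.1 hpos) (hw_nonneg _ _)
    have hval : φ x₀ t₀ = 0 := heq.trans hw0
    have hmin : IsLocalMin (fun y => φ y t₀) x₀ := by
      have hev : ∀ᶠ y in 𝓝 x₀, φ x₀ t₀ ≤ φ y t₀ := by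
        filter_upwards [Metric.ball_mem_nhds x₀ hε] with y hy
        have hy2 : ‖y - x₀‖ ≤ ε := by rw [← dist_eq_norm]; exact hy.le
        have hle := htouch y t₀ hy2 (by simp [hε.le]) le_rfl
        have := hw_nonneg y t₀
        rw [hval]
        linarith
      exact hev
    have hgrad : gradient (fun y => φ y t₀) x₀ = 0 := by
      unfold gradient
      rw [hmin.fderiv_eq_zero]
      simp
    have hderiv : deriv (φ x₀) t₀ ≤ 0 := by
      apply deriv_nonpos_of_left_nonneg hdiffφt hval hε
      intro t h1 h2
      have ht1 : |t - t₀| ≤ ε := by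
        rw [abs_sub_comm, abs_of_nonneg (by linarith)]
        linarith
      exact le_trans (hw_nonneg x₀ t) (htouch x₀ t (by simp [hε.le]) ht1 h2)
    refine ⟨?_, fun _ => ⟨hval, hgrad, hderiv⟩⟩
    rw [hval, hgrad]
    simpa using hderiv
end

section
/- Let u, v : ℝⁿ × [0,T] → [0,∞) be continuous, and for r, δ > 0 with δT < r define Z(x,t) = sup_{(y,τ) ∈ closed ball of radius r about (x,t)} u(y,τ) and W(x,t) = inf_{(y,τ) ∈ closed ball of radius r−δt about (x,t)} v(y,τ). Then Z is upper semicontinuous (indeed continuous), W is continuous, Z ≥ u, W ≤ v, and the positivity set {Z(·,t) > 0} contains the closed r-neighborhood of {u(·,s) > 0} for |s−t| ≤ r; moreover the positivity set of Z has the interior ball property of radius r: every point of ∂{Z > 0} lies on the boundary of a space-time ball of radius r contained in {Z > 0} ∪ ∂{Z>0} whose center lies on ∂{u > 0}. -/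
open Metric Set

/-- Squared Euclidean space-time distance on `ℝⁿ × ℝ`. -/
noncomputable def stDistSq {n : ℕ} (p q : EuclideanSpace ℝ (Fin n) × ℝ) : ℝ :=
  ‖p.1 - q.1‖ ^ 2 + (p.2 - q.2) ^ 2

set_option maxHeartbeats 1000000

/-- properties of the sup-convolution `Z` (over space-time balls of radius
`r`) of `u` and the inf-convolution `W` (over balls of radius `r - δt`) of `v`:
continuity, `Z ≥ u`, `W ≤ v`, the positivity set of `Z` contains the `r`-neighborhood of
the positivity set of `u`, and the positivity set of `Z` has the interior ball property
of radius `r` with centers on `∂{u > 0}`. -/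
theorem sup_inf_convolution_properties {n : ℕ} (T r δ : ℝ)
    (hT : 0 < T) (hr : 0 < r) (hδ : 0 < δ) (hδT : δ * T < r)
    (u v : EuclideanSpace ℝ (Fin n) → ℝ → ℝ)
    (hu_nonneg : ∀ x t, 0 ≤ u x t) (hv_nonneg : ∀ x t, 0 ≤ v x t)
    (hu_cont : Continuous (fun p : EuclideanSpace ℝ (Fin n) × ℝ => u p.1 p.2))
    (hv_cont : Continuous (fun p : EuclideanSpace ℝ (Fin n) × ℝ => v p.1 p.2))
    (Z W : EuclideanSpace ℝ (Fin n) → ℝ → ℝ)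
    (hZ : ∀ x t, Z x t =
      sSup ((fun q : EuclideanSpace ℝ (Fin n) × ℝ => u q.1 q.2) ''
        {q | stDistSq (x, t) q ≤ r ^ 2}))
    (hW : ∀ x t, W x t =
      sInf ((fun q : EuclideanSpace ℝ (Fin n) × ℝ => v q.1 q.2) ''
        {q | stDistSq (x, t) q ≤ (r - δ * t) ^ 2})) :
    -- Z and W are continuous on ℝⁿ × [0,T]
    (ContinuousOn (fun p : EuclideanSpace ℝ (Fin n) × ℝ => Z p.1 p.2) (univ ×ˢ Icc 0 T)) ∧
    (ContinuousOn (fun p : EuclideanSpace ℝ (Fin n) × ℝ => W p.1 p.2) (univ ×ˢ Icc 0 T)) ∧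
    -- Z ≥ u and W ≤ v
    (∀ x, ∀ t ∈ Icc (0:ℝ) T, u x t ≤ Z x t ∧ W x t ≤ v x t) ∧
    -- the positivity set of Z contains the closed r-neighborhood of {u > 0}
    (∀ (x : EuclideanSpace ℝ (Fin n)) (t : ℝ) (y : EuclideanSpace ℝ (Fin n)) (s : ℝ),
      stDistSq (x, t) (y, s) ≤ r ^ 2 → 0 < u y s → 0 < Z x t) ∧
    -- interior ball property of radius r, with centers on ∂{u > 0}
    (∀ p ∈ frontier {p : EuclideanSpace ℝ (Fin n) × ℝ | 0 < Z p.1 p.2},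
      ∃ c ∈ frontier {q : EuclideanSpace ℝ (Fin n) × ℝ | 0 < u q.1 q.2},
        stDistSq p c = r ^ 2 ∧
        ∀ q : EuclideanSpace ℝ (Fin n) × ℝ, stDistSq q c < r ^ 2 →
          q ∈ {p : EuclideanSpace ℝ (Fin n) × ℝ | 0 < Z p.1 p.2} ∪
            frontier {p : EuclideanSpace ℝ (Fin n) × ℝ | 0 < Z p.1 p.2}) := by
  set X := EuclideanSpace ℝ (Fin n) × ℝ
  have hstc : Continuous fun q : X × X => stDistSq q.1 q.2 := by
    unfold stDistSq
    exact ((continuous_fst.fst.sub continuous_snd.fst).norm.pow 2).add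
      ((continuous_fst.snd.sub continuous_snd.snd).pow 2)
  have hsq : ∀ a b : ℝ, 0 ≤ a → 0 ≤ b → a^2 ≤ b^2 → a ≤ b := by
    intro a b ha hb h; nlinarith
  set K : Set X := {w : X | ‖w.1‖^2 + w.2^2 ≤ r^2} with hK_def
  have hK_closed : IsClosed K := isClosed_le ((continuous_fst.norm.pow 2).add (continuous_snd.pow 2)) continuous_const
  have hK_sub : K ⊆ closedBall 0 r := by
    intro w hw
    simp only [hK_def, mem_setOf_eq] at hw
    simp only [mem_closedBall, Prod.dist_eq, Prod.fst_zero, Prod.snd_zero, dist_zero_right]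
    refine max_le ?_ ?_
    · exact hsq _ _ (norm_nonneg _) hr.le (by nlinarith [sq_nonneg w.2])
    · exact hsq _ _ (norm_nonneg _) hr.le
        (by rw [Real.norm_eq_abs, sq_abs]; nlinarith [sq_nonneg ‖w.1‖])
  have hK : IsCompact K := (isCompact_closedBall (0:X) r).of_isClosed_subset hK_closed hK_sub
  have hK0 : (0:X) ∈ K := by
    simp only [hK_def, mem_setOf_eq, Prod.fst_zero, Prod.snd_zero, norm_zero]
    nlinarith [sq_nonneg r]
  have hball : ∀ p : X, {q : X | stDistSq p q ≤ r^2}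
      = (fun w : X => (p.1 + w.1, p.2 + w.2)) '' K := by
    intro p; ext q
    simp only [mem_setOf_eq, mem_image, hK_def]
    constructor
    · intro hq
      refine ⟨(q.1 - p.1, q.2 - p.2), ?_, ?_⟩
      · show ‖q.1 - p.1‖^2 + (q.2 - p.2)^2 ≤ r^2
        simp only [stDistSq] at hq
        rw [norm_sub_rev]
        nlinarith [hq]
      · simp
    · rintro ⟨w, hw, rfl⟩
      show stDistSq p (p.1 + w.1, p.2 + w.2) ≤ r^2
      simp only [stDistSq, sub_add_cancel_left, norm_neg]
      nlinarith [hw]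
  have htrans : ∀ p : X, Continuous fun w : X => ((p.1 + w.1, p.2 + w.2) : X) :=
    fun p => (continuous_const.add continuous_fst).prodMk (continuous_const.add continuous_snd)
  have hball_cpt : ∀ p : X, IsCompact {q : X | stDistSq p q ≤ r^2} := by
    intro p; rw [hball p]; exact hK.image (htrans p)
  have hbdd : ∀ p : X, BddAbove ((fun q : X => u q.1 q.2) '' {q : X | stDistSq p q ≤ r^2}) :=
    fun p => (hball_cpt p).bddAbove_image hu_cont.continuousOn
  have hself : ∀ p : X, stDistSq p p = 0 := by intro p; simp [stDistSq]
  -- Z dominates u over its ball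
  have hZ_ge : ∀ p q : X, stDistSq p q ≤ r^2 → u q.1 q.2 ≤ Z p.1 p.2 := by
    intro p q h
    rw [hZ]
    exact le_csSup (by simpa using hbdd p) ⟨q, by simpa using h, rfl⟩
  have hZ_ge_u : ∀ x t, u x t ≤ Z x t := by
    intro x t
    exact hZ_ge (x, t) (x, t) (by rw [hself]; positivity)
  have hZ_nonneg : ∀ x t, 0 ≤ Z x t := fun x t => (hu_nonneg x t).trans (hZ_ge_u x t)
  -- global continuity of Z
  have hZ_eq : ∀ p : X, Z p.1 p.2 = sSup ((fun w : X => u (p.1 + w.1) (p.2 + w.2)) '' K) := by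
    intro p
    rw [hZ, show ((p.1, p.2) : X) = p from rfl, hball p, image_image]
  have hZcont : Continuous fun p : X => Z p.1 p.2 := by
    have hf : Continuous fun q : X × X => u (q.1.1 + q.2.1) (q.1.2 + q.2.2) :=
      hu_cont.comp ((continuous_fst.fst.add continuous_snd.fst).prodMk
        (continuous_fst.snd.add continuous_snd.snd))
    have h := hK.continuous_sSup (f := fun (p : X) (w : X) => u (p.1 + w.1) (p.2 + w.2)) hf
    have : (fun p : X => Z p.1 p.2)
        = fun p : X => sSup ((fun w : X => u (p.1 + w.1) (p.2 + w.2)) '' K) := funext hZ_eq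
    rw [this]; exact h
  -- W: the scaled description
  have hW_eq : ∀ p : X, p.2 ≤ T → W p.1 p.2 = sInf
      ((fun w : X => v (p.1 + ((r - δ * p.2)/r) • w.1) (p.2 + ((r - δ * p.2)/r) * w.2)) '' K) := by
    intro p hpT
    have hs : 0 < r - δ * p.2 := by nlinarith [mul_le_mul_of_nonneg_left hpT hδ.le]
    set ρ : ℝ := (r - δ * p.2)/r with hρ_def
    have hρ : 0 < ρ := div_pos hs hr
    have hρr : ρ * r = r - δ * p.2 := div_mul_cancel₀ _ hr.ne'
    rw [hW]
    congr 1
    rw [show {q : X | stDistSq (p.1, p.2) q ≤ (r - δ * p.2)^2}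
        = (fun w : X => ((p.1 + ρ • w.1, p.2 + ρ * w.2) : X)) '' K from ?_, image_image]
    ext q
    simp only [mem_setOf_eq, mem_image, hK_def]
    constructor
    · intro hq
      refine ⟨(ρ⁻¹ • (q.1 - p.1), ρ⁻¹ * (q.2 - p.2)), ?_, ?_⟩
      · show ‖ρ⁻¹ • (q.1 - p.1)‖^2 + (ρ⁻¹ * (q.2 - p.2))^2 ≤ r^2
        simp only [stDistSq] at hq
        rw [norm_smul, Real.norm_eq_abs, abs_of_pos (inv_pos.2 hρ)]
        have key : ‖q.1 - p.1‖^2 + (q.2 - p.2)^2 ≤ (ρ * r)^2 := by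
          rw [hρr, norm_sub_rev]; nlinarith [hq]
        have hkey2 := mul_le_mul_of_nonneg_left key (by positivity : (0:ℝ) ≤ ρ⁻¹^2)
        have h2 : ρ⁻¹^2 * (ρ * r)^2 = r^2 := by field_simp
        nlinarith [hkey2, h2]
      · show ((p.1 + ρ • ρ⁻¹ • (q.1 - p.1), p.2 + ρ * (ρ⁻¹ * (q.2 - p.2))) : X) = q
        rw [smul_smul, mul_inv_cancel₀ hρ.ne', one_smul, ← mul_assoc,
          mul_inv_cancel₀ hρ.ne', one_mul]
        exact Prod.ext (add_sub_cancel _ _) (add_sub_cancel _ _)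
    · rintro ⟨w, hw, rfl⟩
      show stDistSq (p.1, p.2) (p.1 + ρ • w.1, p.2 + ρ * w.2) ≤ (r - δ * p.2)^2
      simp only [stDistSq, sub_add_cancel_left, norm_neg, norm_smul, Real.norm_eq_abs,
        abs_of_pos hρ]
      nlinarith [hw, mul_le_mul_of_nonneg_left hw (sq_nonneg ρ)]
  have hWcont : ContinuousOn (fun p : X => W p.1 p.2) (univ ×ˢ Icc 0 T) := by
    have hg : Continuous fun q : X × X =>
        v (q.1.1 + ((r - δ * q.1.2)/r) • q.2.1) (q.1.2 + ((r - δ * q.1.2)/r) * q.2.2) := by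
      refine hv_cont.comp (Continuous.prodMk ?_ ?_)
      · exact continuous_fst.fst.add
          (((continuous_const.sub (continuous_const.mul continuous_fst.snd)).div_const r).smul
            continuous_snd.fst)
      · exact continuous_fst.snd.add
          (((continuous_const.sub (continuous_const.mul continuous_fst.snd)).div_const r).mul
            continuous_snd.snd)
    have hm : Continuous fun p : X => sInf
        ((fun w : X => v (p.1 + ((r - δ * p.2)/r) • w.1) (p.2 + ((r - δ * p.2)/r) * w.2)) '' K) :=
      hK.continuous_sInf
        (f := fun (p : X) (w : X) =>
          v (p.1 + ((r - δ * p.2)/r) • w.1) (p.2 + ((r - δ * p.2)/r) * w.2)) hg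
    exact hm.continuousOn.congr fun p hp => hW_eq p hp.2.2
  -- W ≤ v
  have hW_le : ∀ x t, W x t ≤ v x t := by
    intro x t
    rw [hW]
    refine csInf_le ⟨0, ?_⟩ ⟨(x, t), ?_, rfl⟩
    · rintro y ⟨q, -, rfl⟩; exact hv_nonneg _ _
    · show stDistSq (x, t) (x, t) ≤ (r - δ * t)^2
      rw [hself]; positivity
  refine ⟨hZcont.continuousOn, hWcont, fun x t _ => ⟨hZ_ge_u x t, hW_le x t⟩,
    fun x t y s h hpos => lt_of_lt_of_le hpos (hZ_ge (x, t) (y, s) h), ?_⟩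
  -- interior ball property
  intro p hp
  set S : Set X := {p : X | 0 < Z p.1 p.2} with hS_def
  have hSopen : IsOpen S := isOpen_lt continuous_const hZcont
  have hpcl : p ∈ closure S := hp.1
  have hpnotS : p ∉ S := by
    intro h
    exact hp.2 (by rwa [hSopen.interior_eq])
  have hZp : Z p.1 p.2 = 0 :=
    le_antisymm (not_lt.1 hpnotS) (hZ_nonneg _ _)
  have hu_zero : ∀ q : X, stDistSq p q ≤ r^2 → u q.1 q.2 = 0 := fun q h =>
    le_antisymm (hZp ▸ hZ_ge p q h) (hu_nonneg _ _)
  -- choose approximating sequences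
  have hchoice : ∀ k : ℕ, ∃ pq : X × X, dist p pq.1 < 1/((k:ℝ)+1) ∧
      stDistSq pq.1 pq.2 ≤ r^2 ∧ 0 < u pq.2.1 pq.2.2 := by
    intro k
    have hk : 0 < 1/((k:ℝ)+1) := by positivity
    obtain ⟨p', hp'S, hp'd⟩ := Metric.mem_closure_iff.1 hpcl _ hk
    have : ∃ q ∈ {q : X | stDistSq p' q ≤ r^2}, 0 < u q.1 q.2 := by
      by_contra hcon
      push_neg at hcon
      have hZle : Z p'.1 p'.2 ≤ 0 := by
        rw [hZ_eq]
        refine csSup_le ?_ ?_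
        · exact ⟨u (p'.1 + (0:X).1) (p'.2 + (0:X).2), ⟨0, hK0, rfl⟩⟩
        · rintro y ⟨w, hw, rfl⟩
          exact hcon (p'.1 + w.1, p'.2 + w.2) (by rw [hball p']; exact ⟨w, hw, rfl⟩)
      exact absurd hp'S (show ¬ (0 < Z p'.1 p'.2) from not_lt.2 hZle)
    obtain ⟨q, hq1, hq2⟩ := this
    exact ⟨(p', q), hp'd, hq1, hq2⟩
  choose pq hpd hpball hppos using hchoice
  set ps : ℕ → X := fun k => (pq k).1 with hps_def
  set qs : ℕ → X := fun k => (pq k).2 with hqs_def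
  have hdist_le : ∀ a b : X, stDistSq a b ≤ r^2 → dist b a ≤ r := by
    intro a b h
    simp only [stDistSq] at h
    rw [Prod.dist_eq]
    refine max_le ?_ ?_
    · rw [dist_eq_norm, norm_sub_rev]
      exact hsq _ _ (norm_nonneg _) hr.le (by nlinarith [sq_nonneg (a.2 - b.2)])
    · rw [Real.dist_eq, ← abs_neg, neg_sub]
      exact hsq _ _ (abs_nonneg _) hr.le (by rw [sq_abs]; nlinarith [sq_nonneg ‖a.1 - b.1‖])
  have hq_in : ∀ k, qs k ∈ closedBall p (r + 1) := by
    intro k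
    rw [mem_closedBall]
    have h1 : dist (qs k) (ps k) ≤ r := hdist_le _ _ (hpball k)
    have h2 : dist (ps k) p < 1/((k:ℝ)+1) := by rw [dist_comm]; exact hpd k
    have h3 : 1/((k:ℝ)+1) ≤ 1 := by
      rw [div_le_one (by positivity)]; linarith [Nat.cast_nonneg (α := ℝ) k]
    calc dist (qs k) p ≤ dist (qs k) (ps k) + dist (ps k) p := dist_triangle _ _ _
      _ ≤ r + 1 := by linarith
  obtain ⟨c, -, φ, hφmono, hφtend⟩ :=
    tendsto_subseq_of_bounded (isBounded_closedBall (x := p) (r := r + 1)) hq_in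
  have hps_tend : Filter.Tendsto ps Filter.atTop (nhds p) := by
    rw [tendsto_iff_dist_tendsto_zero]
    refine squeeze_zero (fun k => dist_nonneg) (fun k => ?_) tendsto_one_div_add_atTop_nhds_zero_nat
    rw [dist_comm]; exact (hpd k).le
  have hps_tendφ : Filter.Tendsto (fun j => ps (φ j)) Filter.atTop (nhds p) :=
    hps_tend.comp hφmono.tendsto_atTop
  have hpair : Filter.Tendsto (fun j => ((ps (φ j), qs (φ j)) : X × X)) Filter.atTop
      (nhds (p, c)) := hps_tendφ.prodMk_nhds hφtend
  have hst1 : Filter.Tendsto (fun j => stDistSq (ps (φ j)) (qs (φ j))) Filter.atTop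
      (nhds (stDistSq p c)) := (hstc.tendsto (p, c)).comp hpair
  have hle : stDistSq p c ≤ r^2 :=
    le_of_tendsto hst1 (Filter.Eventually.of_forall fun j => hpball (φ j))
  have hc2 : Continuous fun w : X => stDistSq p w := by unfold stDistSq; fun_prop
  have hst2 : Filter.Tendsto (fun j => stDistSq p (qs (φ j))) Filter.atTop
      (nhds (stDistSq p c)) := (hc2.tendsto c).comp hφtend
  have hge : r^2 ≤ stDistSq p c := by
    refine ge_of_tendsto hst2 (Filter.Eventually.of_forall fun j => ?_)
    by_contra hcon
    push_neg at hcon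
    exact (hppos (φ j)).ne' (hu_zero _ hcon.le)
  have huc : u c.1 c.2 = 0 := hu_zero c hle
  have hccl : c ∈ closure {q : X | 0 < u q.1 q.2} :=
    mem_closure_of_tendsto hφtend (Filter.Eventually.of_forall fun j => hppos (φ j))
  refine ⟨c, ⟨hccl, fun hint => ?_⟩, le_antisymm hle hge, ?_⟩
  · exact (interior_subset hint).ne' huc
  · intro q hq
    left
    show 0 < Z q.1 q.2
    have hopen : IsOpen {w : X | stDistSq q w < r^2} := by
      refine isOpen_lt ?_ continuous_const
      unfold stDistSq; fun_prop
    obtain ⟨w, hw1, hw2⟩ := (_root_.mem_closure_iff.1 hccl _ hopen hq)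
    exact lt_of_lt_of_le hw2 (hZ_ge q w hw1.le)
end

section
/- Mass conservation determines the equilibrium constant: if ρ(·,t) = ((m−1)u(·,t)/m)^{1/(m−1)} preserves its L¹ norm in time and u(·,t) → (C_∞ − Φ)_+ uniformly with uniformly bounded supports, then C_∞ is the unique constant satisfying ∫ u₀^{1/(m−1)} dx = ∫ ((C_∞ − Φ)_+)^{1/(m−1)} dx. Moreover, assuming Φ continuous, strictly convex, and coercive, the map C ↦ ∫ ((C − Φ)_+)^{1/(m−1)} dx is strictly increasing and continuous on (min Φ, ∞), tends to 0 as C → min Φ and to ∞ as C → ∞, so for every M > 0 there is a unique C with ∫ ((C − Φ)_+)^{1/(m−1)} dx = M. -/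
open Metric Set Filter MeasureTheory

/-- mass determines the equilibrium constant: for `Φ` continuous, strictly
convex and coercive with minimum value `m₀ = Φ x_min`, the map
`F : C ↦ ∫ ((C - Φ)_+)^{1/(m-1)} dx` is strictly increasing and continuous on
`(m₀, ∞)`, tends to `0` as `C → m₀⁺` and to `∞` as `C → ∞`; hence for every `M > 0`
there is a unique `C > m₀` with `F C = M`. -/
theorem equilibrium_mass_function {n : ℕ} (hn : 0 < n) (m : ℝ) (hm : 1 < m)
    (Φ : EuclideanSpace ℝ (Fin n) → ℝ) (hcont : Continuous Φ)
    (hconv : StrictConvexOn ℝ univ Φ)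
    (hcoercive : Tendsto Φ (cocompact (EuclideanSpace ℝ (Fin n))) atTop)
    (xmin : EuclideanSpace ℝ (Fin n)) (hmin : ∀ x, Φ xmin ≤ Φ x)
    (F : ℝ → ℝ)
    (hF : ∀ C : ℝ, F C = ∫ x : EuclideanSpace ℝ (Fin n),
      (max (C - Φ x) 0) ^ (1 / (m - 1))) :
    StrictMonoOn F (Ioi (Φ xmin)) ∧
    ContinuousOn F (Ioi (Φ xmin)) ∧
    Tendsto F (nhdsWithin (Φ xmin) (Ioi (Φ xmin))) (nhds 0) ∧
    Tendsto F atTop atTop ∧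
    (∀ M : ℝ, 0 < M → ∃! C : ℝ, C ∈ Ioi (Φ xmin) ∧ F C = M) := by
  set p : ℝ := 1 / (m - 1) with hpdef
  have hm1 : 0 < m - 1 := by linarith
  have hp : 0 < p := by positivity
  set f : ℝ → EuclideanSpace ℝ (Fin n) → ℝ :=
    fun C x => (max (C - Φ x) 0) ^ p with hfdef
  -- basic facts
  have hf_nonneg : ∀ C x, 0 ≤ f C x := fun C x =>
    Real.rpow_nonneg (le_max_right _ _) p
  have hf_cont : ∀ C, Continuous (f C) := fun C =>
    (Real.continuous_rpow_const hp.le).comp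
      ((continuous_const.sub hcont).max continuous_const)
  have hf_zero : ∀ C x, Φ x ≥ C → f C x = 0 := by
    intro C x hx
    have : max (C - Φ x) 0 = 0 := max_eq_right (by linarith)
    simp [hfdef, this, Real.zero_rpow hp.ne']
  have hcpt : ∀ C : ℝ, IsCompact {x | Φ x ≤ C} := by
    intro C
    have h1 : ∀ᶠ x in cocompact (EuclideanSpace ℝ (Fin n)), C + 1 ≤ Φ x :=
      hcoercive.eventually (eventually_ge_atTop (C + 1))
    obtain ⟨K, hKc, hKsub⟩ := mem_cocompact.mp h1
    refine hKc.of_isClosed_subset (isClosed_le hcont continuous_const) ?_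
    intro x hx
    by_contra hxK
    have := hKsub hxK
    simp only [mem_setOf_eq] at this hx
    linarith
  have hf_int : ∀ C, Integrable (f C) := by
    intro C
    refine (hf_cont C).integrable_of_hasCompactSupport ?_
    exact HasCompactSupport.intro (hcpt C) fun x hx =>
      hf_zero C x (le_of_lt (by simpa [mem_setOf_eq, not_le] using hx))
  have hf_mono : ∀ C₁ C₂ : ℝ, C₁ ≤ C₂ → ∀ x, f C₁ x ≤ f C₂ x := by
    intro C₁ C₂ h x
    exact Real.rpow_le_rpow (le_max_right _ _)
      (max_le_max (by linarith) le_rfl) hp.le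
  -- strict monotonicity on Ioi (Φ xmin)
  have hsm : StrictMonoOn F (Ioi (Φ xmin)) := by
    intro C₁ h₁ C₂ _ h12
    rw [hF C₁, hF C₂]
    have hdiff : 0 < ∫ x, (f C₂ x - f C₁ x) := by
      have hrfl : (fun x => f C₂ x - f C₁ x) = f C₂ - f C₁ := rfl
      rw [hrfl, integral_pos_iff_support_of_nonneg
        (fun x => by simpa using sub_nonneg.mpr (hf_mono C₁ C₂ h12.le x))
        ((hf_int C₂).sub (hf_int C₁))]
      have hopen : IsOpen {x | Φ x < C₁} := isOpen_lt hcont continuous_const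
      have hsub : {x | Φ x < C₁} ⊆ Function.support (f C₂ - f C₁) := by
        intro x hx
        simp only [mem_setOf_eq] at hx
        have h1 : max (C₁ - Φ x) 0 = C₁ - Φ x := max_eq_left (by linarith)
        have h2 : max (C₂ - Φ x) 0 = C₂ - Φ x := max_eq_left (by linarith)
        have : f C₁ x < f C₂ x := by
          simp only [hfdef, h1, h2]
          exact Real.rpow_lt_rpow (by linarith) (by linarith) hp
        simp only [Function.mem_support, Pi.sub_apply]
        exact sub_ne_zero_of_ne (ne_of_gt this)
      calc (0 : ENNReal) < volume {x | Φ x < C₁} :=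
            hopen.measure_pos volume ⟨xmin, h₁⟩
        _ ≤ _ := measure_mono hsub
    have := integral_sub (hf_int C₂) (hf_int C₁)
    rw [this] at hdiff
    linarith
  -- global continuity
  have hFc : Continuous F := by
    rw [continuous_iff_continuousAt]
    intro C₀
    have : ContinuousAt (fun C => ∫ x, f C x) C₀ := by
      apply continuousAt_of_dominated
        (bound := f (C₀ + 1))
        (Eventually.of_forall fun C => (hf_cont C).aestronglyMeasurable)
      · filter_upwards [eventually_le_nhds (lt_add_one C₀)] with C hC
        filter_upwards with x
        rw [Real.norm_of_nonneg (hf_nonneg C x)]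
        exact hf_mono C (C₀ + 1) hC x
      · exact hf_int (C₀ + 1)
      · filter_upwards with x
        exact ((Real.continuous_rpow_const hp.le).comp
          ((continuous_sub_right (Φ x)).max continuous_const)).continuousAt
    have heq : F = fun C => ∫ x, f C x := funext hF
    rw [heq]; exact this
  have hF0 : F (Φ xmin) = 0 := by
    rw [hF]
    have : ∀ x, f (Φ xmin) x = 0 := fun x => hf_zero _ x (hmin x)
    simp only [hfdef] at this
    simp [this]
  -- tendsto at min
  have ht0 : Tendsto F (nhdsWithin (Φ xmin) (Ioi (Φ xmin))) (nhds 0) := by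
    have := (hFc.tendsto (Φ xmin)).mono_left
      (nhdsWithin_le_nhds (s := Ioi (Φ xmin)))
    rwa [hF0] at this
  -- tendsto atTop
  have httop : Tendsto F atTop atTop := by
    obtain ⟨x₀, -, hmax⟩ := (isCompact_closedBall xmin 1).exists_isMaxOn
      ⟨xmin, mem_closedBall_self zero_le_one⟩ hcont.continuousOn
    set K : ℝ := Φ x₀ with hKdef
    have hK : ∀ x ∈ closedBall xmin (1:ℝ), Φ x ≤ K := fun x hx => hmax hx
    set v : ℝ := (volume (ball xmin (1:ℝ))).toReal with hv
    have hvpos : 0 < v := by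
      refine ENNReal.toReal_pos ?_ (measure_ball_lt_top).ne
      exact (isOpen_ball.measure_pos volume ⟨xmin, mem_ball_self zero_lt_one⟩).ne'
    have hlb : ∀ C : ℝ, K ≤ C → v * (C - K) ^ p ≤ F C := by
      intro C hC
      rw [hF]
      have h1 : ∫ x in ball xmin 1, (C - K) ^ p ∂volume = v * (C - K) ^ p := by
        rw [setIntegral_const]; simp [hv, smul_eq_mul, measureReal_def]
      have h2 : (∫ x in ball xmin 1, (C - K) ^ p ∂volume)
          ≤ ∫ x in ball xmin 1, f C x ∂volume := by
        refine setIntegral_mono_on (integrableOn_const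
          (measure_ball_lt_top).ne) ((hf_int C).integrableOn)
          measurableSet_ball ?_
        intro x hx
        have hΦ : Φ x ≤ K := hK x (ball_subset_closedBall hx)
        have : (C - K) ≤ max (C - Φ x) 0 := le_max_of_le_left (by linarith)
        exact Real.rpow_le_rpow (by linarith) this hp.le
      have h3 : (∫ x in ball xmin 1, f C x ∂volume) ≤ ∫ x, f C x :=
        setIntegral_le_integral (hf_int C) (Eventually.of_forall (hf_nonneg C))
      calc v * (C - K) ^ p = _ := h1.symm
        _ ≤ _ := h2
        _ ≤ _ := h3
    have hg : Tendsto (fun C : ℝ => v * (C - K) ^ p) atTop atTop := by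
      apply Tendsto.const_mul_atTop hvpos
      exact (tendsto_rpow_atTop hp).comp (tendsto_atTop_add_const_right _ (-K)
        tendsto_id)
    refine tendsto_atTop_mono' _ ?_ hg
    filter_upwards [eventually_ge_atTop K] with C hC using hlb C hC
  refine ⟨hsm, hFc.continuousOn, ht0, httop, ?_⟩
  -- existence and uniqueness
  intro M hM
  obtain ⟨C₁, hC₁M, hC₁gt⟩ :=
    ((httop.eventually_ge_atTop M).and (eventually_ge_atTop (Φ xmin))).exists
  have hivt := intermediate_value_Icc hC₁gt hFc.continuousOn
  have hmem : M ∈ Icc (F (Φ xmin)) (F C₁) := by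
    rw [hF0]; exact ⟨hM.le, hC₁M⟩
  obtain ⟨C, hCmem, hCF⟩ := hivt hmem
  have hCgt : Φ xmin < C := by
    rcases eq_or_lt_of_le hCmem.1 with h | h
    · exfalso; rw [← h, hF0] at hCF; linarith
    · exact h
  refine ⟨C, ⟨hCgt, hCF⟩, ?_⟩
  intro C' ⟨hC'gt, hC'F⟩
  exact hsm.injOn hC'gt hCgt (by rw [hCF, hC'F])
end
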